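/- Set μ₁ = (1−√5)/2 and μ₂ = (3−√5)/2, and define the polynomial map F : ℂ²×ℂ² → ℂ²×ℂ² by F((u₀,u₁),(v₀,v₁)) = ((2(v₁−v₀)u₁, (√5−1)v₁(u₀−u₁)), (2u₁, (√5−3)(u₀−u₁))). Then: (i) the first component of F vanishes identically exactly at the representatives of the two points p = ([1:0],[1:0]) and r = ([1:1],[1:1]), so the induced rational self-map ψ of ℙ¹(ℂ)×ℙ¹(ℂ) has base points exactly p and r; (ii) ψ maps q = ([0:1],[0:1]) to s = ([1:μ₁],[1:μ₂]) and maps s to r; (iii) there exist polynomials P and Q in u₀,u₁,v₀,v₁, not identically zero, such that the fifth iterate satisfies F⁵(u,v) = (P(u,v)·u, Q(u,v)·v) identically on ℂ²×ℂ²; consequently ψ is a birational self-map of order exactly 5. -/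
import Mathlib


noncomputable section

open ComplexConjugate

/-- The projective line `ℙ¹(K)` over a field `K`, i.e. the projectivization of `K²`. -/
abbrev Pone (K : Type) [Field K] : Type := Projectivization K (Fin 2 → K)

theorem vec_ne_zero {K : Type} [Field K] {a b : K} (h : a ≠ 0 ∨ b ≠ 0) :
    (![a, b] : Fin 2 → K) ≠ 0 := by
  intro hv
  rcases h with h | h
  · exact h (by simpa using congrFun hv 0)
  · exact h (by simpa using congrFun hv 1)

/-- The point `[a : b]` of the projective line `ℙ¹(K)`. -/
def pt {K : Type} [Field K] (a b : K) (h : a ≠ 0 ∨ b ≠ 0) : Pone K :=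
  Projectivization.mk K ![a, b] (vec_ne_zero h)

/-- The point `[1 : 0]` of `ℙ¹(ℂ)`. -/
def P10 : Pone ℂ := pt 1 0 (Or.inl one_ne_zero)

/-- The point `[1 : 1]` of `ℙ¹(ℂ)`. -/
def P11 : Pone ℂ := pt 1 1 (Or.inl one_ne_zero)

/-- The point `[1 : b]` of `ℙ¹(ℂ)`. -/
def Pb (b : ℂ) : Pone ℂ := pt 1 b (Or.inl one_ne_zero)

/-- The parameter `μ₁ = (1 − √5)/2`. -/
noncomputable def μ₁ : ℝ := (1 - Real.sqrt 5) / 2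

/-- The parameter `μ₂ = (3 − √5)/2`. -/
noncomputable def μ₂ : ℝ := (3 - Real.sqrt 5) / 2

/-- The polynomial map
`F((u₀,u₁),(v₀,v₁)) = ((2(v₁−v₀)u₁, (√5−1)v₁(u₀−u₁)), (2u₁, (√5−3)(u₀−u₁)))`. -/
noncomputable def F16 (w : (Fin 2 → ℂ) × (Fin 2 → ℂ)) : (Fin 2 → ℂ) × (Fin 2 → ℂ) :=
  (![2 * (w.2 1 - w.2 0) * w.1 1, ((Real.sqrt 5 : ℂ) - 1) * w.2 1 * (w.1 0 - w.1 1)],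
   ![2 * w.1 1, ((Real.sqrt 5 : ℂ) - 3) * (w.1 0 - w.1 1)])

lemma hs5C : ((Real.sqrt 5 : ℝ) : ℂ)^2 = 5 := by
  have h : Real.sqrt 5 ^ 2 = 5 := Real.sq_sqrt (by norm_num)
  exact_mod_cast congrArg (fun x : ℝ => (x : ℂ)) h

set_option maxHeartbeats 1000000 in
noncomputable def G1 (a b c d : ℂ) : (Fin 2 → ℂ) × (Fin 2 → ℂ) :=
  (![(-2:ℂ) * b*c + (2:ℂ) * b*d,
    (1:ℂ) * a*d*(Real.sqrt 5 : ℂ) + (-1:ℂ) * a*d + (-1:ℂ) * b*d*(Real.sqrt 5 : ℂ) + (1:ℂ) * b*d],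
   ![(2:ℂ) * b,
    (1:ℂ) * a*(Real.sqrt 5 : ℂ) + (-3:ℂ) * a + (-1:ℂ) * b*(Real.sqrt 5 : ℂ) + (3:ℂ) * b])

set_option maxHeartbeats 1000000 in
noncomputable def G2 (a b c d : ℂ) : (Fin 2 → ℂ) × (Fin 2 → ℂ) :=
  (![(-8:ℂ) * a^2*d*(Real.sqrt 5 : ℂ) + (16:ℂ) * a^2*d + (12:ℂ) * a*b*d*(Real.sqrt 5 : ℂ) + (-28:ℂ) * a*b*d + (-4:ℂ) * b^2*d*(Real.sqrt 5 : ℂ) + (12:ℂ) * b^2*d,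
    (-12:ℂ) * a^2*d*(Real.sqrt 5 : ℂ) + (28:ℂ) * a^2*d + (8:ℂ) * a*b*c*(Real.sqrt 5 : ℂ) + (-16:ℂ) * a*b*c + (16:ℂ) * a*b*d*(Real.sqrt 5 : ℂ) + (-40:ℂ) * a*b*d + (-8:ℂ) * b^2*c*(Real.sqrt 5 : ℂ) + (16:ℂ) * b^2*c + (-4:ℂ) * b^2*d*(Real.sqrt 5 : ℂ) + (12:ℂ) * b^2*d],
   ![(2:ℂ) * a*d*(Real.sqrt 5 : ℂ) + (-2:ℂ) * a*d + (-2:ℂ) * b*d*(Real.sqrt 5 : ℂ) + (2:ℂ) * b*d,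
    (4:ℂ) * a*d*(Real.sqrt 5 : ℂ) + (-8:ℂ) * a*d + (-2:ℂ) * b*c*(Real.sqrt 5 : ℂ) + (6:ℂ) * b*c + (-2:ℂ) * b*d*(Real.sqrt 5 : ℂ) + (2:ℂ) * b*d])

set_option maxHeartbeats 1000000 in
noncomputable def G3 (a b c d : ℂ) : (Fin 2 → ℂ) × (Fin 2 → ℂ) :=
  (![(256:ℂ) * a^3*d^2*(Real.sqrt 5 : ℂ) + (-576:ℂ) * a^3*d^2 + (-416:ℂ) * a^2*b*c*d*(Real.sqrt 5 : ℂ) + (928:ℂ) * a^2*b*c*d + (-352:ℂ) * a^2*b*d^2*(Real.sqrt 5 : ℂ) + (800:ℂ) * a^2*b*d^2 + (160:ℂ) * a*b^2*c^2*(Real.sqrt 5 : ℂ) + (-352:ℂ) * a*b^2*c^2 + (512:ℂ) * a*b^2*c*d*(Real.sqrt 5 : ℂ) + (-1152:ℂ) * a*b^2*c*d + (96:ℂ) * a*b^2*d^2*(Real.sqrt 5 : ℂ) + (-224:ℂ) * a*b^2*d^2 + (-160:ℂ) * b^3*c^2*(Real.sqrt 5 : ℂ) + (352:ℂ) * b^3*c^2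 + (-96:ℂ) * b^3*c*d*(Real.sqrt 5 : ℂ) + (224:ℂ) * b^3*c*d,
    (256:ℂ) * a^3*d^2*(Real.sqrt 5 : ℂ) + (-576:ℂ) * a^3*d^2 + (-576:ℂ) * a^2*b*c*d*(Real.sqrt 5 : ℂ) + (1280:ℂ) * a^2*b*c*d + (-352:ℂ) * a^2*b*d^2*(Real.sqrt 5 : ℂ) + (800:ℂ) * a^2*b*d^2 + (256:ℂ) * a*b^2*c^2*(Real.sqrt 5 : ℂ) + (-576:ℂ) * a*b^2*c^2 + (736:ℂ) * a*b^2*c*d*(Real.sqrt 5 : ℂ) + (-1632:ℂ) * a*b^2*c*d + (96:ℂ) * a*b^2*d^2*(Real.sqrt 5 : ℂ) + (-224:ℂ) * a*b^2*d^2 + (-256:ℂ) * b^3*c^2*(Real.sqrt 5 : ℂ) + (576:ℂ) * b^3*c^2 + (-160:ℂ) * b^3*c*d*(Real.sqrt 5 : ℂ) + (352:ℂ) * b^3*c*d],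
   ![(-24:ℂ) * a^2*d*(Real.sqrt 5 : ℂ) + (56:ℂ) * a^2*d + (16:ℂ) * a*b*c*(Real.sqrt 5 : ℂ) + (-32:ℂ) * a*b*c + (32:ℂ) * a*b*d*(Real.sqrt 5 : ℂ) + (-80:ℂ) * a*b*d + (-16:ℂ) * b^2*c*(Real.sqrt 5 : ℂ) + (32:ℂ) * b^2*c + (-8:ℂ) * b^2*d*(Real.sqrt 5 : ℂ) + (24:ℂ) * b^2*d,
    (-24:ℂ) * a^2*d*(Real.sqrt 5 : ℂ) + (56:ℂ) * a^2*d + (40:ℂ) * a*b*c*(Real.sqrt 5 : ℂ) + (-88:ℂ) * a*b*c + (24:ℂ) * a*b*d*(Real.sqrt 5 : ℂ) + (-56:ℂ) * a*b*d + (-40:ℂ) * b^2*c*(Real.sqrt 5 : ℂ) + (88:ℂ) * b^2*c])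

set_option maxHeartbeats 1000000 in
noncomputable def G4 (a b c d : ℂ) : (Fin 2 → ℂ) × (Fin 2 → ℂ) :=
  (![(-56320:ℂ) * a^4*b*c*d^2*(Real.sqrt 5 : ℂ) + (125952:ℂ) * a^4*b*c*d^2 + (21504:ℂ) * a^4*b*d^3*(Real.sqrt 5 : ℂ) + (-48128:ℂ) * a^4*b*d^3 + (125952:ℂ) * a^3*b^2*c^2*d*(Real.sqrt 5 : ℂ) + (-281600:ℂ) * a^3*b^2*c^2*d + (86016:ℂ) * a^3*b^2*c*d^2*(Real.sqrt 5 : ℂ) + (-192512:ℂ) * a^3*b^2*c*d^2 + (-51200:ℂ) * a^3*b^2*d^3*(Real.sqrt 5 : ℂ) + (114688:ℂ) * a^3*b^2*d^3 + (-56320:ℂ) * a^2*b^3*c^3*(Real.sqrt 5 : ℂ) + (125952:ℂ) * a^2*b^3*c^3 + (-265216:ℂ) * a^2*b^3*c^2*d*(Real.sqrt 5 : ℂ) + (592896:ℂ) * a^2*b^3*c^2*d + (10240:ℂ) * a^2*b^3*c*d^2*(Real.sqrt 5 : ℂ) + (-22528:ℂ) * a^2*b^3*c*d^2 + (37888:ℂ)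 * a^2*b^3*d^3*(Real.sqrt 5 : ℂ) + (-84992:ℂ) * a^2*b^3*d^3 + (112640:ℂ) * a*b^4*c^3*(Real.sqrt 5 : ℂ) + (-251904:ℂ) * a*b^4*c^3 + (152576:ℂ) * a*b^4*c^2*d*(Real.sqrt 5 : ℂ) + (-340992:ℂ) * a*b^4*c^2*d + (-53248:ℂ) * a*b^4*c*d^2*(Real.sqrt 5 : ℂ) + (118784:ℂ) * a*b^4*c*d^2 + (-8192:ℂ) * a*b^4*d^3*(Real.sqrt 5 : ℂ) + (18432:ℂ) * a*b^4*d^3 + (-56320:ℂ) * b^5*c^3*(Real.sqrt 5 : ℂ) + (125952:ℂ) * b^5*c^3 + (-13312:ℂ) * b^5*c^2*d*(Real.sqrt 5 : ℂ) + (29696:ℂ) * b^5*c^2*d + (13312:ℂ) * b^5*c*d^2*(Real.sqrt 5 : ℂ) + (-29696:ℂ) * b^5*c*d^2,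
    (-56320:ℂ) * a^4*b*c*d^2*(Real.sqrt 5 : ℂ) + (125952:ℂ) * a^4*b*c*d^2 + (125952:ℂ) * a^3*b^2*c^2*d*(Real.sqrt 5 : ℂ) + (-281600:ℂ) * a^3*b^2*c^2*d + (134144:ℂ) * a^3*b^2*c*d^2*(Real.sqrt 5 : ℂ) + (-300032:ℂ) * a^3*b^2*c*d^2 + (-56320:ℂ) * a^2*b^3*c^3*(Real.sqrt 5 : ℂ) + (125952:ℂ) * a^2*b^3*c^3 + (-286720:ℂ) * a^2*b^3*c^2*d*(Real.sqrt 5 : ℂ) + (641024:ℂ) * a^2*b^3*c^2*d + (-99328:ℂ) * a^2*b^3*c*d^2*(Real.sqrt 5 : ℂ) + (222208:ℂ) * a^2*b^3*c*d^2 + (112640:ℂ) * a*b^4*c^3*(Real.sqrt 5 : ℂ) + (-251904:ℂ) * a*b^4*c^3 + (195584:ℂ) * a*b^4*c^2*d*(Real.sqrt 5 : ℂ) + (-437248:ℂ) * a*b^4*c^2*d + (21504:ℂ) * a*b^4*c*d^2*(Real.sqrt 5 : ℂ) + (-48128:ℂ) * a*b^4*c*d^2 + (-56320:ℂ) * b^5*c^3*(Real.sqrt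 5 : ℂ) + (125952:ℂ) * b^5*c^3 + (-34816:ℂ) * b^5*c^2*d*(Real.sqrt 5 : ℂ) + (77824:ℂ) * b^5*c^2*d],
   ![(512:ℂ) * a^3*d^2*(Real.sqrt 5 : ℂ) + (-1152:ℂ) * a^3*d^2 + (-1152:ℂ) * a^2*b*c*d*(Real.sqrt 5 : ℂ) + (2560:ℂ) * a^2*b*c*d + (-704:ℂ) * a^2*b*d^2*(Real.sqrt 5 : ℂ) + (1600:ℂ) * a^2*b*d^2 + (512:ℂ) * a*b^2*c^2*(Real.sqrt 5 : ℂ) + (-1152:ℂ) * a*b^2*c^2 + (1472:ℂ) * a*b^2*c*d*(Real.sqrt 5 : ℂ) + (-3264:ℂ) * a*b^2*c*d + (192:ℂ) * a*b^2*d^2*(Real.sqrt 5 : ℂ) + (-448:ℂ) * a*b^2*d^2 + (-512:ℂ) * b^3*c^2*(Real.sqrt 5 : ℂ) + (1152:ℂ) * b^3*c^2 + (-320:ℂ) * b^3*c*d*(Real.sqrt 5 : ℂ) + (704:ℂ) * b^3*c*d,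
    (-832:ℂ) * a^2*b*c*d*(Real.sqrt 5 : ℂ) + (1856:ℂ) * a^2*b*c*d + (512:ℂ) * a*b^2*c^2*(Real.sqrt 5 : ℂ) + (-1152:ℂ) * a*b^2*c^2 + (1152:ℂ) * a*b^2*c*d*(Real.sqrt 5 : ℂ) + (-2560:ℂ) * a*b^2*c*d + (-512:ℂ) * b^3*c^2*(Real.sqrt 5 : ℂ) + (1152:ℂ) * b^3*c^2 + (-320:ℂ) * b^3*c*d*(Real.sqrt 5 : ℂ) + (704:ℂ) * b^3*c*d])

set_option maxHeartbeats 1000000 in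
noncomputable def Pfun (a b c d : ℂ) : ℂ := (262144:ℂ) * ((-987:ℂ) * a^6*b*c*d^4*(Real.sqrt 5 : ℂ) + (2207:ℂ) * a^6*b*c*d^4 + (2817:ℂ) * a^5*b^2*c^2*d^3*(Real.sqrt 5 : ℂ) + (-6299:ℂ) * a^5*b^2*c^2*d^3 + (3715:ℂ) * a^5*b^2*c*d^4*(Real.sqrt 5 : ℂ) + (-8307:ℂ) * a^5*b^2*c*d^4 + (-2351:ℂ) * a^4*b^3*c^3*d^2*(Real.sqrt 5 : ℂ) + (5257:ℂ) * a^4*b^3*c^3*d^2 + (-10137:ℂ) * a^4*b^3*c^2*d^3*(Real.sqrt 5 : ℂ) + (22667:ℂ) * a^4*b^3*c^2*d^3 + (-5367:ℂ) * a^4*b^3*c*d^4*(Real.sqrt 5 : ℂ) + (12001:ℂ) * a^4*b^3*c*d^4 + (610:ℂ) * a^3*b^4*c^4*d*(Real.sqrt 5 : ℂ) + (-1364:ℂ) * a^3*b^4*c^4*d + (7807:ℂ) * a^3*b^4*c^3*d^2*(Real.sqrt 5 : ℂ) + (-17457:ℂ) * a^3*b^4*c^3*d^2 + (13742:ℂ)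 * a^3*b^4*c^2*d^3*(Real.sqrt 5 : ℂ) + (-30728:ℂ) * a^3*b^4*c^2*d^3 + (3681:ℂ) * a^3*b^4*c*d^4*(Real.sqrt 5 : ℂ) + (-8231:ℂ) * a^3*b^4*c*d^4 + (-1830:ℂ) * a^2*b^5*c^4*d*(Real.sqrt 5 : ℂ) + (4092:ℂ) * a^2*b^5*c^4*d + (-9315:ℂ) * a^2*b^5*c^3*d^2*(Real.sqrt 5 : ℂ) + (20829:ℂ) * a^2*b^5*c^3*d^2 + (-8574:ℂ) * a^2*b^5*c^2*d^3*(Real.sqrt 5 : ℂ) + (19172:ℂ) * a^2*b^5*c^2*d^3 + (-1186:ℂ) * a^2*b^5*c*d^4*(Real.sqrt 5 : ℂ) + (2652:ℂ) * a^2*b^5*c*d^4 + (1830:ℂ) * a*b^6*c^4*d*(Real.sqrt 5 : ℂ) + (-4092:ℂ) * a*b^6*c^4*d + (4613:ℂ) * a*b^6*c^3*d^2*(Real.sqrt 5 : ℂ) + (-10315:ℂ) * a*b^6*c^3*d^2 + (2385:ℂ) * a*b^6*c^2*d^3*(Real.sqrt 5 : ℂ) + (-5333:ℂ) * a*b^6*c^2*d^3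 + (144:ℂ) * a*b^6*c*d^4*(Real.sqrt 5 : ℂ) + (-322:ℂ) * a*b^6*c*d^4 + (-610:ℂ) * b^7*c^4*d*(Real.sqrt 5 : ℂ) + (1364:ℂ) * b^7*c^4*d + (-754:ℂ) * b^7*c^3*d^2*(Real.sqrt 5 : ℂ) + (1686:ℂ) * b^7*c^3*d^2 + (-233:ℂ) * b^7*c^2*d^3*(Real.sqrt 5 : ℂ) + (521:ℂ) * b^7*c^2*d^3)

set_option maxHeartbeats 1000000 in
noncomputable def Qfun (a b c d : ℂ) : ℂ := (2048:ℂ) * ((-55:ℂ) * a^4*b*d^2*(Real.sqrt 5 : ℂ) + (123:ℂ) * a^4*b*d^2 + (123:ℂ) * a^3*b^2*c*d*(Real.sqrt 5 : ℂ) + (-275:ℂ) * a^3*b^2*c*d + (131:ℂ) * a^3*b^2*d^2*(Real.sqrt 5 : ℂ) + (-293:ℂ) * a^3*b^2*d^2 + (-55:ℂ) * a^2*b^3*c^2*(Real.sqrt 5 : ℂ) + (123:ℂ) * a^2*b^3*c^2 + (-280:ℂ) * a^2*b^3*c*d*(Real.sqrt 5 : ℂ) + (626:ℂ) * a^2*b^3*c*d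 + (-97:ℂ) * a^2*b^3*d^2*(Real.sqrt 5 : ℂ) + (217:ℂ) * a^2*b^3*d^2 + (110:ℂ) * a*b^4*c^2*(Real.sqrt 5 : ℂ) + (-246:ℂ) * a*b^4*c^2 + (191:ℂ) * a*b^4*c*d*(Real.sqrt 5 : ℂ) + (-427:ℂ) * a*b^4*c*d + (21:ℂ) * a*b^4*d^2*(Real.sqrt 5 : ℂ) + (-47:ℂ) * a*b^4*d^2 + (-55:ℂ) * b^5*c^2*(Real.sqrt 5 : ℂ) + (123:ℂ) * b^5*c^2 + (-34:ℂ) * b^5*c*d*(Real.sqrt 5 : ℂ) + (76:ℂ) * b^5*c*d)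

set_option maxHeartbeats 2000000 in
set_option maxRecDepth 100000 in
lemma step1 (a b c d : ℂ) : F16 ((![a,b],![c,d])) = G1 a b c d := by
  refine Prod.ext ?_ ?_
  · funext i; fin_cases i
    · simp only [F16, G1, G2, G3, G4, Pfun, Qfun, Matrix.cons_val_zero,
        Matrix.cons_val_one, Matrix.head_cons, Fin.zero_eta, Fin.mk_one, Pi.smul_apply, smul_eq_mul] <;>
        linear_combination ((0:ℂ)) * hs5C
    · simp only [F16, G1, G2, G3, G4, Pfun, Qfun, Matrix.cons_val_zero,
        Matrix.cons_val_one, Matrix.head_cons, Fin.zero_eta, Fin.mk_one, Pi.smul_apply, smul_eq_mul] <;>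
        linear_combination ((0:ℂ)) * hs5C
  · funext i; fin_cases i
    · simp only [F16, G1, G2, G3, G4, Pfun, Qfun, Matrix.cons_val_zero,
        Matrix.cons_val_one, Matrix.head_cons, Fin.zero_eta, Fin.mk_one, Pi.smul_apply, smul_eq_mul] <;>
        linear_combination ((0:ℂ)) * hs5C
    · simp only [F16, G1, G2, G3, G4, Pfun, Qfun, Matrix.cons_val_zero,
        Matrix.cons_val_one, Matrix.head_cons, Fin.zero_eta, Fin.mk_one, Pi.smul_apply, smul_eq_mul] <;>
        linear_combination ((0:ℂ)) * hs5C

set_option maxHeartbeats 2000000 in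
set_option maxRecDepth 100000 in
lemma step2 (a b c d : ℂ) : F16 (G1 a b c d) = G2 a b c d := by
  refine Prod.ext ?_ ?_
  · funext i; fin_cases i
    · simp only [F16, G1, G2, G3, G4, Pfun, Qfun, Matrix.cons_val_zero,
        Matrix.cons_val_one, Matrix.head_cons, Fin.zero_eta, Fin.mk_one, Pi.smul_apply, smul_eq_mul] <;>
        linear_combination ((2:ℂ) * a^2*d + (-4:ℂ) * a*b*d + (2:ℂ) * b^2*d) * hs5C
    · simp only [F16, G1, G2, G3, G4, Pfun, Qfun, Matrix.cons_val_zero,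
        Matrix.cons_val_one, Matrix.head_cons, Fin.zero_eta, Fin.mk_one, Pi.smul_apply, smul_eq_mul] <;>
        linear_combination ((-1:ℂ) * a^2*d*(Real.sqrt 5 : ℂ) + (5:ℂ) * a^2*d + (-2:ℂ) * a*b*c + (2:ℂ) * a*b*d*(Real.sqrt 5 : ℂ) + (-8:ℂ) * a*b*d + (2:ℂ) * b^2*c + (-1:ℂ) * b^2*d*(Real.sqrt 5 : ℂ) + (3:ℂ) * b^2*d) * hs5C
  · funext i; fin_cases i
    · simp only [F16, G1, G2, G3, G4, Pfun, Qfun, Matrix.cons_val_zero,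
        Matrix.cons_val_one, Matrix.head_cons, Fin.zero_eta, Fin.mk_one, Pi.smul_apply, smul_eq_mul] <;>
        linear_combination ((0:ℂ)) * hs5C
    · simp only [F16, G1, G2, G3, G4, Pfun, Qfun, Matrix.cons_val_zero,
        Matrix.cons_val_one, Matrix.head_cons, Fin.zero_eta, Fin.mk_one, Pi.smul_apply, smul_eq_mul] <;>
        linear_combination ((-1:ℂ) * a*d + (1:ℂ) * b*d) * hs5C

set_option maxHeartbeats 2000000 in
set_option maxRecDepth 100000 in
lemma step3 (a b c d : ℂ) : F16 (G2 a b c d) = G3 a b c d := by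
  refine Prod.ext ?_ ?_
  · funext i; fin_cases i
    · simp only [F16, G1, G2, G3, G4, Pfun, Qfun, Matrix.cons_val_zero,
        Matrix.cons_val_one, Matrix.head_cons, Fin.zero_eta, Fin.mk_one, Pi.smul_apply, smul_eq_mul] <;>
        linear_combination ((-48:ℂ) * a^3*d^2 + (80:ℂ) * a^2*b*c*d + (64:ℂ) * a^2*b*d^2 + (-32:ℂ) * a*b^2*c^2 + (-96:ℂ) * a*b^2*c*d + (-16:ℂ) * a*b^2*d^2 + (32:ℂ) * b^3*c^2 + (16:ℂ) * b^3*c*d) * hs5C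
    · simp only [F16, G1, G2, G3, G4, Pfun, Qfun, Matrix.cons_val_zero,
        Matrix.cons_val_one, Matrix.head_cons, Fin.zero_eta, Fin.mk_one, Pi.smul_apply, smul_eq_mul] <;>
        linear_combination ((16:ℂ) * a^3*d^2*(Real.sqrt 5 : ℂ) + (-96:ℂ) * a^3*d^2 + (-40:ℂ) * a^2*b*c*d*(Real.sqrt 5 : ℂ) + (216:ℂ) * a^2*b*c*d + (-24:ℂ) * a^2*b*d^2*(Real.sqrt 5 : ℂ) + (136:ℂ) * a^2*b*d^2 + (16:ℂ) * a*b^2*c^2*(Real.sqrt 5 : ℂ) + (-96:ℂ) * a*b^2*c^2 + (56:ℂ) * a*b^2*c*d*(Real.sqrt 5 : ℂ) + (-280:ℂ) * a*b^2*c*d + (8:ℂ) * a*b^2*d^2*(Real.sqrt 5 : ℂ) + (-40:ℂ) * a*b^2*d^2 + (-16:ℂ) * b^3*c^2*(Real.sqrt 5 : ℂ) + (96:ℂ) * b^3*c^2 + (-16:ℂ) * b^3*c*d*(Real.sqrt 5 : ℂ) + (64:ℂ) * b^3*c*d) * hs5C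
  · funext i; fin_cases i
    · simp only [F16, G1, G2, G3, G4, Pfun, Qfun, Matrix.cons_val_zero,
        Matrix.cons_val_one, Matrix.head_cons, Fin.zero_eta, Fin.mk_one, Pi.smul_apply, smul_eq_mul] <;>
        linear_combination ((0:ℂ)) * hs5C
    · simp only [F16, G1, G2, G3, G4, Pfun, Qfun, Matrix.cons_val_zero,
        Matrix.cons_val_one, Matrix.head_cons, Fin.zero_eta, Fin.mk_one, Pi.smul_apply, smul_eq_mul] <;>
        linear_combination ((4:ℂ) * a^2*d + (-8:ℂ) * a*b*c + (-4:ℂ) * a*b*d + (8:ℂ) * b^2*c) * hs5C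

set_option maxHeartbeats 2000000 in
set_option maxRecDepth 100000 in
lemma step4 (a b c d : ℂ) : F16 (G3 a b c d) = G4 a b c d := by
  refine Prod.ext ?_ ?_
  · funext i; fin_cases i
    · simp only [F16, G1, G2, G3, G4, Pfun, Qfun, Matrix.cons_val_zero,
        Matrix.cons_val_one, Matrix.head_cons, Fin.zero_eta, Fin.mk_one, Pi.smul_apply, smul_eq_mul] <;>
        linear_combination ((12288:ℂ) * a^4*b*c*d^2 + (-4096:ℂ) * a^4*b*d^3 + (-27648:ℂ) * a^3*b^2*c^2*d + (-19968:ℂ) * a^3*b^2*c*d^2 + (9728:ℂ) * a^3*b^2*d^3 + (12288:ℂ) * a^2*b^3*c^3 + (58880:ℂ) * a^2*b^3*c^2*d + (512:ℂ) * a^2*b^3*c*d^2 + (-7168:ℂ) * a^2*b^3*d^3 + (-24576:ℂ) * a*b^4*c^3 + (-34816:ℂ) * a*b^4*c^2*d + (9728:ℂ) * a*b^4*c*d^2 + (1536:ℂ) * a*b^4*d^3 + (12288:ℂ) * b^5*c^3 + (3584:ℂ) * b^5*c^2*d + (-2560:ℂ) * b^5*c*d^2) * hs5C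
    · simp only [F16, G1, G2, G3, G4, Pfun, Qfun, Matrix.cons_val_zero,
        Matrix.cons_val_one, Matrix.head_cons, Fin.zero_eta, Fin.mk_one, Pi.smul_apply, smul_eq_mul] <;>
        linear_combination ((-3840:ℂ) * a^4*b*c*d^2*(Real.sqrt 5 : ℂ) + (21248:ℂ) * a^4*b*c*d^2 + (8704:ℂ) * a^3*b^2*c^2*d*(Real.sqrt 5 : ℂ) + (-47616:ℂ) * a^3*b^2*c^2*d + (9216:ℂ) * a^3*b^2*c*d^2*(Real.sqrt 5 : ℂ) + (-50688:ℂ) * a^3*b^2*c*d^2 + (-3840:ℂ) * a^2*b^3*c^3*(Real.sqrt 5 : ℂ) + (21248:ℂ) * a^2*b^3*c^3 + (-19968:ℂ) * a^2*b^3*c^2*d*(Real.sqrt 5 : ℂ) + (108544:ℂ) * a^2*b^3*c^2*d + (-6912:ℂ) * a^2*b^3*c*d^2*(Real.sqrt 5 : ℂ) + (37632:ℂ) * a^2*b^3*c*d^2 + (7680:ℂ) * a*b^4*c^3*(Real.sqrt 5 : ℂ) + (-42496:ℂ) * a*b^4*c^3 + (13824:ℂ) * a*b^4*c^2*d*(Real.sqrt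 5 : ℂ) + (-74240:ℂ) * a*b^4*c^2*d + (1536:ℂ) * a*b^4*c*d^2*(Real.sqrt 5 : ℂ) + (-8192:ℂ) * a*b^4*c*d^2 + (-3840:ℂ) * b^5*c^3*(Real.sqrt 5 : ℂ) + (21248:ℂ) * b^5*c^3 + (-2560:ℂ) * b^5*c^2*d*(Real.sqrt 5 : ℂ) + (13312:ℂ) * b^5*c^2*d) * hs5C
  · funext i; fin_cases i
    · simp only [F16, G1, G2, G3, G4, Pfun, Qfun, Matrix.cons_val_zero,
        Matrix.cons_val_one, Matrix.head_cons, Fin.zero_eta, Fin.mk_one, Pi.smul_apply, smul_eq_mul] <;>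
        linear_combination ((0:ℂ)) * hs5C
    · simp only [F16, G1, G2, G3, G4, Pfun, Qfun, Matrix.cons_val_zero,
        Matrix.cons_val_one, Matrix.head_cons, Fin.zero_eta, Fin.mk_one, Pi.smul_apply, smul_eq_mul] <;>
        linear_combination ((160:ℂ) * a^2*b*c*d + (-96:ℂ) * a*b^2*c^2 + (-224:ℂ) * a*b^2*c*d + (96:ℂ) * b^3*c^2 + (64:ℂ) * b^3*c*d) * hs5C

set_option maxHeartbeats 2000000 in
set_option maxRecDepth 100000 in
lemma step5 (a b c d : ℂ) : F16 (G4 a b c d) = (Pfun a b c d • ![a,b], Qfun a b c d • ![c,d]) := by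
  refine Prod.ext ?_ ?_
  · funext i; fin_cases i
    · simp only [F16, G1, G2, G3, G4, Pfun, Qfun, Matrix.cons_val_zero,
        Matrix.cons_val_one, Matrix.head_cons, Fin.zero_eta, Fin.mk_one, Pi.smul_apply, smul_eq_mul] <;>
        linear_combination ((57671680:ℂ) * a^7*b*c*d^4 + (-165019648:ℂ) * a^6*b^2*c^2*d^3 + (-216662016:ℂ) * a^6*b^2*c*d^4 + (138280960:ℂ) * a^5*b^3*c^3*d^2 + (592838656:ℂ) * a^5*b^3*c^2*d^3 + (312213504:ℂ) * a^5*b^3*c*d^4 + (-36044800:ℂ) * a^4*b^4*c^4*d + (-458752000:ℂ) * a^4*b^4*c^3*d^2 + (-801767424:ℂ) * a^4*b^4*c^2*d^3 + (-213385216:ℂ) * a^4*b^4*c*d^4 + (108134400:ℂ) * a^3*b^5*c^4*d + (546570240:ℂ) * a^3*b^5*c^3*d^2 + (498466816:ℂ) * a^3*b^5*c^2*d^3 + (68419584:ℂ) * a^3*b^5*c*d^4 + (-108134400:ℂ) * a^2*b^6*c^4*d + (-270008320:ℂ) * a^2*b^6*c^3*d^2 + (-137887744:ℂ) * a^2*b^6*c^2*d^3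 + (-8257536:ℂ) * a^2*b^6*c*d^4 + (36044800:ℂ) * a*b^7*c^4*d + (43909120:ℂ) * a*b^7*c^3*d^2 + (13369344:ℂ) * a*b^7*c^2*d^3) * hs5C
    · simp only [F16, G1, G2, G3, G4, Pfun, Qfun, Matrix.cons_val_zero,
        Matrix.cons_val_one, Matrix.head_cons, Fin.zero_eta, Fin.mk_one, Pi.smul_apply, smul_eq_mul] <;>
        linear_combination ((-17891328:ℂ) * a^6*b^2*c*d^4*(Real.sqrt 5 : ℂ) + (97845248:ℂ) * a^6*b^2*c*d^4 + (51052544:ℂ) * a^5*b^3*c^2*d^3*(Real.sqrt 5 : ℂ) + (-279248896:ℂ) * a^5*b^3*c^2*d^3 + (67371008:ℂ) * a^5*b^3*c*d^4*(Real.sqrt 5 : ℂ) + (-368312320:ℂ) * a^5*b^3*c*d^4 + (-42532864:ℂ) * a^4*b^4*c^3*d^2*(Real.sqrt 5 : ℂ) + (232980480:ℂ) * a^4*b^4*c^3*d^2 + (-183828480:ℂ) * a^4*b^4*c^2*d^3*(Real.sqrt 5 : ℂ) + (1004994560:ℂ) * a^4*b^4*c^2*d^3 + (-97386496:ℂ)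 * a^4*b^4*c*d^4*(Real.sqrt 5 : ℂ) + (532152320:ℂ) * a^4*b^4*c*d^4 + (11010048:ℂ) * a^3*b^5*c^4*d*(Real.sqrt 5 : ℂ) + (-60424192:ℂ) * a^3*b^5*c^4*d + (141295616:ℂ) * a^3*b^5*c^3*d^2*(Real.sqrt 5 : ℂ) + (-773718016:ℂ) * a^3*b^5*c^3*d^2 + (249430016:ℂ) * a^3*b^5*c^2*d^3*(Real.sqrt 5 : ℂ) + (-1362624512:ℂ) * a^3*b^5*c^2*d^3 + (66846720:ℂ) * a^3*b^5*c*d^4*(Real.sqrt 5 : ℂ) + (-365035520:ℂ) * a^3*b^5*c*d^4 + (-33030144:ℂ) * a^2*b^6*c^4*d*(Real.sqrt 5 : ℂ) + (181272576:ℂ) * a^2*b^6*c^4*d + (-168689664:ℂ) * a^2*b^6*c^3*d^2*(Real.sqrt 5 : ℂ) + (923271168:ℂ) * a^2*b^6*c^3*d^2 + (-155844608:ℂ) * a^2*b^6*c^2*d^3*(Real.sqrt 5 : ℂ) + (850395136:ℂ) * a^2*b^6*c^2*d^3 + (-21561344:ℂ) * a^2*b^6*c*d^4*(Real.sqrt 5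 : ℂ) + (117637120:ℂ) * a^2*b^6*c*d^4 + (33030144:ℂ) * a*b^7*c^4*d*(Real.sqrt 5 : ℂ) + (-181272576:ℂ) * a*b^7*c^4*d + (83623936:ℂ) * a*b^7*c^3*d^2*(Real.sqrt 5 : ℂ) + (-457310208:ℂ) * a*b^7*c^3*d^2 + (43450368:ℂ) * a*b^7*c^2*d^3*(Real.sqrt 5 : ℂ) + (-236650496:ℂ) * a*b^7*c^2*d^3 + (2621440:ℂ) * a*b^7*c*d^4*(Real.sqrt 5 : ℂ) + (-14286848:ℂ) * a*b^7*c*d^4 + (-11010048:ℂ) * b^8*c^4*d*(Real.sqrt 5 : ℂ) + (60424192:ℂ) * b^8*c^4*d + (-13697024:ℂ) * b^8*c^3*d^2*(Real.sqrt 5 : ℂ) + (74776576:ℂ) * b^8*c^3*d^2 + (-4259840:ℂ) * b^8*c^2*d^3*(Real.sqrt 5 : ℂ) + (23134208:ℂ) * b^8*c^2*d^3) * hs5C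
  · funext i; fin_cases i
    · simp only [F16, G1, G2, G3, G4, Pfun, Qfun, Matrix.cons_val_zero,
        Matrix.cons_val_one, Matrix.head_cons, Fin.zero_eta, Fin.mk_one, Pi.smul_apply, smul_eq_mul] <;>
        linear_combination ((0:ℂ)) * hs5C
    · simp only [F16, G1, G2, G3, G4, Pfun, Qfun, Matrix.cons_val_zero,
        Matrix.cons_val_one, Matrix.head_cons, Fin.zero_eta, Fin.mk_one, Pi.smul_apply, smul_eq_mul] <;>
        linear_combination ((21504:ℂ) * a^4*b*d^3 + (-48128:ℂ) * a^3*b^2*c*d^2 + (-51200:ℂ) * a^3*b^2*d^3 + (21504:ℂ) * a^2*b^3*c^2*d + (109568:ℂ) * a^2*b^3*c*d^2 + (37888:ℂ) * a^2*b^3*d^3 + (-43008:ℂ) * a*b^4*c^2*d + (-74752:ℂ) * a*b^4*c*d^2 + (-8192:ℂ) * a*b^4*d^3 + (21504:ℂ) * b^5*c^2*d + (13312:ℂ) * b^5*c*d^2) * hs5C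

lemma keylemma (a b c d : ℂ) :
    F16^[5] (![a,b],![c,d]) = (Pfun a b c d • ![a,b], Qfun a b c d • ![c,d]) := by
  show F16 (F16 (F16 (F16 (F16 (![a,b],![c,d]))))) = _
  rw [step1, step2, step3, step4, step5]

lemma s5m3 : ((Real.sqrt 5 : ℝ) : ℂ) - 3 ≠ 0 := by
  intro h
  have h4 : (4:ℂ) = 0 := by
    linear_combination (-(((Real.sqrt 5:ℝ):ℂ)+3))*h + hs5C
  norm_num at h4

lemma s5m1 : ((Real.sqrt 5 : ℝ) : ℂ) - 1 ≠ 0 := by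
  intro h
  have h4 : (4:ℂ) = 0 := by
    linear_combination (((Real.sqrt 5:ℝ):ℂ)+1)*h - hs5C
  norm_num at h4

set_option maxHeartbeats 2000000 in
set_option maxRecDepth 100000 in
/-- With `μ₁ = (1−√5)/2` and `μ₂ = (3−√5)/2`:
(i) the first component of `F16` vanishes identically exactly at the representatives of the
two points `p = ([1:0],[1:0])` and `r = ([1:1],[1:1])` (while the second component never
vanishes), so the induced rational self-map `ψ` of `ℙ¹(ℂ) × ℙ¹(ℂ)` has base points exactly
`p` and `r`;
(ii) `ψ` maps `q = ([0:1],[0:1])` to `s = ([1:μ₁],[1:μ₂])` and maps `s` to `r`;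
(iii) there are polynomial functions `P`, `Q` in `u₀, u₁, v₀, v₁`, not identically zero,
with `F16⁵(u, v) = (P(u,v) • u, Q(u,v) • v)` identically on `ℂ² × ℂ²`; consequently `ψ` is a
birational self-map of order exactly `5`. -/
theorem statement16 :
    -- (i)
    (∀ (u v : Fin 2 → ℂ) (hu : u ≠ 0) (hv : v ≠ 0),
      (F16 (u, v)).2 ≠ 0 ∧
      ((F16 (u, v)).1 = 0 ↔
        ((Projectivization.mk ℂ u hu, Projectivization.mk ℂ v hv) = (P10, P10) ∨
          (Projectivization.mk ℂ u hu, Projectivization.mk ℂ v hv) = (P11, P11)))) ∧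
    -- (ii)
    (∃ (h1 : (F16 (![0, 1], ![0, 1])).1 ≠ 0) (h2 : (F16 (![0, 1], ![0, 1])).2 ≠ 0),
      (Projectivization.mk ℂ (F16 (![0, 1], ![0, 1])).1 h1,
       Projectivization.mk ℂ (F16 (![0, 1], ![0, 1])).2 h2)
        = (Pb (μ₁ : ℂ), Pb (μ₂ : ℂ))) ∧
    (∃ (h1 : (F16 (![1, (μ₁ : ℂ)], ![1, (μ₂ : ℂ)])).1 ≠ 0)
        (h2 : (F16 (![1, (μ₁ : ℂ)], ![1, (μ₂ : ℂ)])).2 ≠ 0),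
      (Projectivization.mk ℂ (F16 (![1, (μ₁ : ℂ)], ![1, (μ₂ : ℂ)])).1 h1,
       Projectivization.mk ℂ (F16 (![1, (μ₁ : ℂ)], ![1, (μ₂ : ℂ)])).2 h2)
        = (P11, P11)) ∧
    -- (iii)
    (∃ P Q : (Fin 2 → ℂ) × (Fin 2 → ℂ) → ℂ, P ≠ 0 ∧ Q ≠ 0 ∧
      ∀ w, F16^[5] w = (P w • w.1, Q w • w.2)) := by
  have hs := hs5C
  refine ⟨?_, ?_, ?_, ?_⟩
  · -- (i)
    intro u v hu hv
    refine ⟨?_, ?_, ?_⟩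
    · intro h
      have h0 := congrFun h 0
      have h1 := congrFun h 1
      simp only [F16, Matrix.cons_val_zero, Matrix.cons_val_one, Matrix.head_cons,
        Pi.zero_apply] at h0 h1
      have hb : u 1 = 0 := by
        rcases mul_eq_zero.mp h0 with h' | h'
        · norm_num at h'
        · exact h'
      have ha : u 0 = 0 := by
        rcases mul_eq_zero.mp h1 with h' | h'
        · exact absurd h' s5m3
        · rw [hb] at h'; simpa using h'
      exact hu (funext fun i => by fin_cases i <;> simp [ha, hb])
    · -- forward direction of iff
      intro h
      have h0 := congrFun h 0
      have h1 := congrFun h 1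
      simp only [F16, Matrix.cons_val_zero, Matrix.cons_val_one, Matrix.head_cons,
        Pi.zero_apply] at h0 h1
      by_cases hb : u 1 = 0
      · have ha : u 0 ≠ 0 := by
          intro h'
          exact hu (funext fun i => by fin_cases i <;> simp [h', hb])
        have hv1 : v 1 = 0 := by
          rw [hb, sub_zero] at h1
          rcases mul_eq_zero.mp h1 with h' | h'
          · rcases mul_eq_zero.mp h' with h'' | h''
            · exact absurd h'' s5m1
            · exact h''
          · exact absurd h' ha
        have hv0 : v 0 ≠ 0 := by
          intro h'
          exact hv (funext fun i => by fin_cases i <;> simp [h', hv1])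
        left
        refine Prod.ext ?_ ?_
        · show Projectivization.mk ℂ u hu = P10
          unfold P10 pt
          rw [Projectivization.mk_eq_mk_iff']
          exact ⟨u 0, funext fun i => by fin_cases i <;> simp [hb]⟩
        · show Projectivization.mk ℂ v hv = P10
          unfold P10 pt
          rw [Projectivization.mk_eq_mk_iff']
          exact ⟨v 0, funext fun i => by fin_cases i <;> simp [hv1]⟩
      · have hdc : v 1 = v 0 := by
          rcases mul_eq_zero.mp h0 with h' | h'
          · rcases mul_eq_zero.mp h' with h'' | h''
            · norm_num at h''
            · exact sub_eq_zero.mp h''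
          · exact absurd h' hb
        have hv1 : v 1 ≠ 0 := by
          intro h'
          exact hv (funext fun i => by fin_cases i <;>
            simp [h', hdc.symm.trans h'])
        have hab : u 0 = u 1 := by
          rcases mul_eq_zero.mp h1 with h' | h'
          · rcases mul_eq_zero.mp h' with h'' | h''
            · exact absurd h'' s5m1
            · exact absurd h'' hv1
          · exact sub_eq_zero.mp h'
        right
        refine Prod.ext ?_ ?_
        · show Projectivization.mk ℂ u hu = P11
          unfold P11 pt
          rw [Projectivization.mk_eq_mk_iff']
          exact ⟨u 1, funext fun i => by fin_cases i <;> simp [hab]⟩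
        · show Projectivization.mk ℂ v hv = P11
          unfold P11 pt
          rw [Projectivization.mk_eq_mk_iff']
          exact ⟨v 1, funext fun i => by fin_cases i <;> simp [hdc]⟩
    · -- backward direction of iff
      intro h
      rcases h with h | h <;> obtain ⟨hA, hB⟩ := Prod.ext_iff.mp h
      · unfold P10 pt at hA hB
        rw [Projectivization.mk_eq_mk_iff'] at hA hB
        obtain ⟨x, hx⟩ := hA
        obtain ⟨y, hy⟩ := hB
        have hu1 : u 1 = 0 := by
          have := congrFun hx 1; simpa using this.symm
        have hv1 : v 1 = 0 := by
          have := congrFun hy 1; simpa using this.symm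
        funext i
        fin_cases i <;> simp [F16, hu1, hv1]
      · unfold P11 pt at hA hB
        rw [Projectivization.mk_eq_mk_iff'] at hA hB
        obtain ⟨x, hx⟩ := hA
        obtain ⟨y, hy⟩ := hB
        have hu01 : u 0 = u 1 := by
          have h0 := congrFun hx 0
          have h1 := congrFun hx 1
          simp at h0 h1
          rw [← h0, ← h1]
        have hv01 : v 1 = v 0 := by
          have h0 := congrFun hy 0
          have h1 := congrFun hy 1
          simp at h0 h1
          rw [← h0, ← h1]
        funext i
        fin_cases i <;> simp [F16, hu01, hv01]
  · -- (ii) first map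
    have h1 : (F16 (![0, 1], ![0, 1])).1 ≠ 0 := by
      intro h
      have := congrFun h 0
      simp [F16] at this
    have h2 : (F16 (![0, 1], ![0, 1])).2 ≠ 0 := by
      intro h
      have := congrFun h 0
      simp [F16] at this
    refine ⟨h1, h2, ?_⟩
    refine Prod.ext ?_ ?_
    · show Projectivization.mk ℂ (F16 (![0, 1], ![0, 1])).1 h1 = Pb (μ₁ : ℂ)
      unfold Pb pt
      rw [Projectivization.mk_eq_mk_iff']
      refine ⟨2, funext fun i => ?_⟩
      fin_cases i <;>
        simp [F16, μ₁, Pi.smul_apply, smul_eq_mul] <;> push_cast <;> ring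
    · show Projectivization.mk ℂ (F16 (![0, 1], ![0, 1])).2 h2 = Pb (μ₂ : ℂ)
      unfold Pb pt
      rw [Projectivization.mk_eq_mk_iff']
      refine ⟨2, funext fun i => ?_⟩
      fin_cases i <;>
        simp [F16, μ₂, Pi.smul_apply, smul_eq_mul] <;> push_cast <;> ring
  · -- (ii) second map
    have hm1 : ((μ₁ : ℝ) : ℂ) = (1 - ((Real.sqrt 5:ℝ):ℂ))/2 := by
      unfold μ₁; push_cast; ring
    have hm2 : ((μ₂ : ℝ) : ℂ) = (3 - ((Real.sqrt 5:ℝ):ℂ))/2 := by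
      unfold μ₂; push_cast; ring
    have hm1ne : ((μ₁ : ℝ) : ℂ) ≠ 0 := by
      rw [hm1]
      intro h
      have h4 : (4:ℂ) = 0 := by
        linear_combination (-(2:ℂ))*(1+((Real.sqrt 5:ℝ):ℂ))*h - hs
      norm_num at h4
    have hm2ne : ((μ₂ : ℝ) : ℂ) ≠ 0 := by
      rw [hm2]
      intro h
      have h4 : (4:ℂ) = 0 := by
        linear_combination (2:ℂ)*(3+((Real.sqrt 5:ℝ):ℂ))*h + hs
      norm_num at h4
    have hm21ne : ((μ₂ : ℝ) : ℂ) - 1 ≠ 0 := by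
      rw [hm2]
      intro h
      have h4 : (4:ℂ) = 0 := by
        linear_combination (-(2:ℂ))*(1+((Real.sqrt 5:ℝ):ℂ))*h - hs
      norm_num at h4
    have h1 : (F16 (![1, (μ₁ : ℂ)], ![1, (μ₂ : ℂ)])).1 ≠ 0 := by
      intro h
      have h0 := congrFun h 0
      simp only [F16, Matrix.cons_val_zero, Matrix.cons_val_one, Matrix.head_cons,
        Pi.zero_apply] at h0
      rcases mul_eq_zero.mp h0 with h' | h'
      · rcases mul_eq_zero.mp h' with h'' | h''
        · norm_num at h''
        · exact hm21ne h''
      · exact hm1ne h'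
    have h2 : (F16 (![1, (μ₁ : ℂ)], ![1, (μ₂ : ℂ)])).2 ≠ 0 := by
      intro h
      have h0 := congrFun h 0
      simp only [F16, Matrix.cons_val_zero, Matrix.cons_val_one, Matrix.head_cons,
        Pi.zero_apply] at h0
      rcases mul_eq_zero.mp h0 with h' | h'
      · norm_num at h'
      · exact hm1ne h'
    refine ⟨h1, h2, ?_⟩
    refine Prod.ext ?_ ?_
    · show Projectivization.mk ℂ (F16 (![1, (μ₁ : ℂ)], ![1, (μ₂ : ℂ)])).1 h1 = P11
      unfold P11 pt
      rw [Projectivization.mk_eq_mk_iff']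
      refine ⟨2 * (((μ₂ : ℝ) : ℂ) - 1) * ((μ₁ : ℝ) : ℂ), funext fun i => ?_⟩
      fin_cases i <;>
        simp only [F16, Matrix.cons_val_zero, Matrix.cons_val_one, Matrix.head_cons,
          Fin.zero_eta, Fin.mk_one, Pi.smul_apply, smul_eq_mul] <;>
        rw [hm1, hm2] <;> [ring; linear_combination ((((Real.sqrt 5:ℝ):ℂ)-1)/4) * hs]
    · show Projectivization.mk ℂ (F16 (![1, (μ₁ : ℂ)], ![1, (μ₂ : ℂ)])).2 h2 = P11
      unfold P11 pt
      rw [Projectivization.mk_eq_mk_iff']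
      refine ⟨2 * ((μ₁ : ℝ) : ℂ), funext fun i => ?_⟩
      fin_cases i <;>
        simp only [F16, Matrix.cons_val_zero, Matrix.cons_val_one, Matrix.head_cons,
          Fin.zero_eta, Fin.mk_one, Pi.smul_apply, smul_eq_mul] <;>
        rw [hm1] <;> [ring; linear_combination (-(1:ℂ)/2) * hs]
  · -- (iii)
    refine ⟨fun w => Pfun (w.1 0) (w.1 1) (w.2 0) (w.2 1),
            fun w => Qfun (w.1 0) (w.1 1) (w.2 0) (w.2 1), ?_, ?_, ?_⟩
    · intro h
      have h2 := congrFun h (![2,1], ![1,1])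
      simp only [Matrix.cons_val_zero, Matrix.cons_val_one, Matrix.head_cons,
        Pi.zero_apply, Pfun] at h2
      have h4 : (4:ℂ) = 0 := by
        linear_combination ((843+377*((Real.sqrt 5:ℝ):ℂ))/262144) * h2 + 142129 * hs
      norm_num at h4
    · intro h
      have h2 := congrFun h (![2,1], ![1,1])
      simp only [Matrix.cons_val_zero, Matrix.cons_val_one, Matrix.head_cons,
        Pi.zero_apply, Qfun] at h2
      have h4 : (4:ℂ) = 0 := by
        linear_combination ((47+21*((Real.sqrt 5:ℝ):ℂ))/2048) * h2 + 441 * hs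
      norm_num at h4
    · rintro ⟨u, v⟩
      have hu : u = ![u 0, u 1] := by
        funext i; fin_cases i <;> rfl
      have hv : v = ![v 0, v 1] := by
        funext i; fin_cases i <;> rfl
      calc F16^[5] (u, v) = F16^[5] (![u 0, u 1], ![v 0, v 1]) := by rw [← hu, ← hv]
        _ = (Pfun (u 0) (u 1) (v 0) (v 1) • ![u 0, u 1],
             Qfun (u 0) (u 1) (v 0) (v 1) • ![v 0, v 1]) := keylemma _ _ _ _
        _ = _ := by rw [← hu, ← hv]
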